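/- arXiv:2508.01864 — 5 statements merged into one kernel-verified Lean document; each statement's English description precedes it below -/
import Mathlib

section
/- Let k : ℝ → ℝ satisfy k(u-v) = Σ_{p=1}^{P} φ_{1,p}(u)φ_{2,p}(v) for all u,v ∈ ℝ, and define K(u) = k(|u|). Then for any points x₁,…,x_N ∈ ℝ, weights y₁,…,y_N ∈ ℝ, and z ∈ ℝ: Σ_{i=1}^N y_i K(x_i − z) = Σ_{p=1}^P φ_{1,p}(z)·(Σ_{i: x_i ≤ z} y_i φ_{2,p}(x_i)) + Σ_{p=1}^P φ_{1,p}(−z)·(Σ_{i: x_i > z} y_i φ_{2,p}(−x_i)). -/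
open Finset in
theorem univariate_kernel_cdf_decomposition
    (P : ℕ) (k : ℝ → ℝ) (φ₁ φ₂ : Fin P → ℝ → ℝ)
    (hdec : ∀ u v : ℝ, k (u - v) = ∑ p, φ₁ p u * φ₂ p v)
    (K : ℝ → ℝ) (hK : ∀ u : ℝ, K u = k |u|)
    (N : ℕ) (x : Fin N → ℝ) (y : Fin N → ℝ) (z : ℝ) :
    ∑ i, y i * K (x i - z) =
      (∑ p, φ₁ p z * ∑ i ∈ univ.filter (fun i => x i ≤ z), y i * φ₂ p (x i))
        + ∑ p, φ₁ p (-z) * ∑ i ∈ univ.filter (fun i => z < x i), y i * φ₂ p (-(x i)) := by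
  classical
  have hsplit := Finset.sum_filter_add_sum_filter_not Finset.univ
    (fun i => x i ≤ z) (fun i => y i * K (x i - z))
  rw [← hsplit]
  congr 1
  · have h1 : ∀ i ∈ univ.filter (fun i => x i ≤ z),
        y i * K (x i - z) = ∑ p, φ₁ p z * (y i * φ₂ p (x i)) := by
      intro i hi
      simp only [Finset.mem_filter] at hi
      have habs : |x i - z| = z - x i := by
        rw [abs_of_nonpos (by linarith [hi.2])]; ring
      rw [hK, habs, hdec, Finset.mul_sum]
      exact Finset.sum_congr rfl fun p _ => by ring
    rw [Finset.sum_congr rfl h1, Finset.sum_comm]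
    exact Finset.sum_congr rfl fun p _ => (Finset.mul_sum _ _ _).symm
  · have hfilt : univ.filter (fun i => ¬ x i ≤ z) = univ.filter (fun i => z < x i) := by
      simp [not_le]
    rw [hfilt]
    have h1 : ∀ i ∈ univ.filter (fun i => z < x i),
        y i * K (x i - z) = ∑ p, φ₁ p (-z) * (y i * φ₂ p (-(x i))) := by
      intro i hi
      simp only [Finset.mem_filter] at hi
      have habs : |x i - z| = (-z) - (-(x i)) := by
        rw [abs_of_nonneg (by linarith [hi.2])]; ring
      rw [hK, habs, hdec, Finset.mul_sum]
      exact Finset.sum_congr rfl fun p _ => by ring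
    rw [Finset.sum_congr rfl h1, Finset.sum_comm]
    exact Finset.sum_congr rfl fun p _ => (Finset.mul_sum _ _ _).symm
end

section
/- Let k : ℝ → ℝ satisfy k(u-v) = Σ_{p=1}^{P} φ_{1,p}(u)φ_{2,p}(v) for all u,v ∈ ℝ, and define the L1 kernel K(u) = k(‖u‖₁) on ℝ^d. Then for points x₁,…,x_N ∈ ℝ^d, weights y_i ∈ ℝ, and z ∈ ℝ^d: Σ_{i=1}^N y_i K(x_i − z) = Σ_{δ ∈ {−1,1}^d} Σ_{p=1}^P φ_{1,p}(δ·z) Σ_{i=1}^N y_i φ_{2,p}(δ·x_i) 𝟙{δ_k x_{k,i} ≤_{δ_k} δ_k z_k for all k=1,…,d}, where ≤_{+1} means ≤ and ≤_{−1} means <, and δ·z denotes the dot product Σ_k δ_k z_k. -/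
open Finset in
/-- Fast CDF decomposition of the L1 kernel `K u = k (‖u‖₁)`.
Each orthant sign vector `δ ∈ {-1,1}^d` is encoded by `δ : Fin d → Bool`,
with `sgn δ k = 1` if `δ k = true` and `-1` otherwise; the generalized
inequality `δ_k x ≤_{δ_k} δ_k z` is non-strict when `δ k = true` (i.e. `x ≤ z`)
and strict when `δ k = false` (i.e. `z < x`). -/
theorem l1_kernel_cdf_decomposition
    (P : ℕ) (k : ℝ → ℝ) (φ₁ φ₂ : Fin P → ℝ → ℝ)
    (hdec : ∀ u v : ℝ, k (u - v) = ∑ p, φ₁ p u * φ₂ p v)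
    (d N : ℕ) (x : Fin N → Fin d → ℝ) (y : Fin N → ℝ) (z : Fin d → ℝ)
    (sgn : Bool → ℝ) (hsgn : sgn = fun b => if b then 1 else -1) :
    ∑ i, y i * k (∑ t, |x i t - z t|) =
      ∑ δ : Fin d → Bool, ∑ p,
        φ₁ p (∑ t, sgn (δ t) * z t) *
          ∑ i ∈ univ.filter (fun i => ∀ t, if δ t then x i t ≤ z t else z t < x i t),
            y i * φ₂ p (∑ t, sgn (δ t) * x i t) := by
  subst hsgn
  have cond_iff : ∀ (i : Fin N) (δ : Fin d → Bool),
      (∀ t, if δ t then x i t ≤ z t else z t < x i t) ↔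
        δ = fun t => decide (x i t ≤ z t) := by
    intro i δ
    constructor
    · intro h; funext t
      have ht := h t
      by_cases hb : δ t
      · rw [hb]
        rw [hb] at ht
        norm_num at ht
        simp [ht]
      · simp only [Bool.not_eq_true] at hb
        rw [hb]
        rw [hb] at ht
        norm_num at ht
        simp [not_le.2 ht]
    · rintro rfl t
      by_cases hle : x i t ≤ z t
      · simp [hle]
      · simp [hle, lt_of_not_ge hle]
  have main : ∀ i : Fin N,
      y i * k (∑ t, |x i t - z t|) =
      ∑ δ : Fin d → Bool, ∑ p,
        (if (∀ t, if δ t then x i t ≤ z t else z t < x i t) then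
          φ₁ p (∑ t, (if δ t then (1:ℝ) else -1) * z t) *
            (y i * φ₂ p (∑ t, (if δ t then (1:ℝ) else -1) * x i t)) else 0) := by
    intro i
    set δ₀ : Fin d → Bool := fun t => decide (x i t ≤ z t) with hδ₀
    rw [Finset.sum_eq_single δ₀]
    · have hc : (∀ t, if δ₀ t then x i t ≤ z t else z t < x i t) :=
        (cond_iff i δ₀).2 rfl
      simp only [if_pos hc]
      have hkey : (∑ t, (if δ₀ t then (1:ℝ) else -1) * z t)
          - (∑ t, (if δ₀ t then (1:ℝ) else -1) * x i t) = ∑ t, |x i t - z t| := by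
        rw [← Finset.sum_sub_distrib]
        refine Finset.sum_congr rfl fun t _ => ?_
        by_cases hle : x i t ≤ z t
        · simp only [hδ₀, hle, decide_true, if_true, one_mul]
          rw [abs_sub_comm, abs_of_nonneg (sub_nonneg.2 hle)]
        · have hb : δ₀ t = false := by simp [hδ₀, hle]
          rw [hb]
          norm_num
          rw [abs_of_nonneg (sub_nonneg.2 (le_of_lt (lt_of_not_ge hle)))]
          ring
      rw [← hkey, hdec, Finset.mul_sum]
      exact Finset.sum_congr rfl fun p _ => by ring
    · intro δ _ hne
      have : ¬ (∀ t, if δ t then x i t ≤ z t else z t < x i t) := by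
        rw [cond_iff i δ]; exact hne
      simp [this]
    · intro h; exact absurd (Finset.mem_univ δ₀) h
  calc ∑ i, y i * k (∑ t, |x i t - z t|)
      = ∑ i, ∑ δ : Fin d → Bool, ∑ p,
        (if (∀ t, if δ t then x i t ≤ z t else z t < x i t) then
          φ₁ p (∑ t, (if δ t then (1:ℝ) else -1) * z t) *
            (y i * φ₂ p (∑ t, (if δ t then (1:ℝ) else -1) * x i t)) else 0) :=
        Finset.sum_congr rfl fun i _ => main i
    _ = ∑ δ : Fin d → Bool, ∑ i, ∑ p, _ := Finset.sum_comm
    _ = ∑ δ : Fin d → Bool, ∑ p, ∑ i,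
        (if (∀ t, if δ t then x i t ≤ z t else z t < x i t) then
          φ₁ p (∑ t, (if δ t then (1:ℝ) else -1) * z t) *
            (y i * φ₂ p (∑ t, (if δ t then (1:ℝ) else -1) * x i t)) else 0) :=
        Finset.sum_congr rfl fun δ _ => Finset.sum_comm
    _ = _ := by
        refine Finset.sum_congr rfl fun δ _ => Finset.sum_congr rfl fun p _ => ?_
        rw [Finset.sum_filter, Finset.mul_sum]
        exact Finset.sum_congr rfl fun i _ => by rw [mul_ite, mul_zero]
end

section
/- Let k : ℝ → ℝ satisfy k(u-v) = Σ_{p=1}^{P} φ_{1,p}(u)φ_{2,p}(v) for all u,v ∈ ℝ, and define the product kernel K(u) = Π_{k=1}^d k(|u_k|) on ℝ^d. Then Σ_{i=1}^N y_i K(x_i − z) = Σ_{θ ∈ {1,…,P}^d} Σ_{δ ∈ {−1,1}^d} (Π_{k=1}^d φ_{1,θ_k}(δ_k z_k)) · Σ_{i=1}^N y_i (Π_{k=1}^d φ_{2,θ_k}(δ_k x_{k,i})) 𝟙{δ_k x_{k,i} ≤_{δ_k} δ_k z_k for all k}, where ≤_{+1} means ≤ and ≤_{−1} means <. -/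
open Finset in
/-- Fast CDF decomposition of the product kernel `K u = ∏ k (|u_t|)`.
Orthant sign vectors `δ ∈ {-1,1}^d` are encoded by `δ : Fin d → Bool` via
`sgn`, and the multi-index `θ ∈ {1,…,P}^d` by `θ : Fin d → Fin P`. -/
theorem product_kernel_cdf_decomposition
    (P : ℕ) (k : ℝ → ℝ) (φ₁ φ₂ : Fin P → ℝ → ℝ)
    (hdec : ∀ u v : ℝ, k (u - v) = ∑ p, φ₁ p u * φ₂ p v)
    (d N : ℕ) (x : Fin N → Fin d → ℝ) (y : Fin N → ℝ) (z : Fin d → ℝ)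
    (sgn : Bool → ℝ) (hsgn : sgn = fun b => if b then 1 else -1) :
    ∑ i, y i * ∏ t, k |x i t - z t| =
      ∑ θ : Fin d → Fin P, ∑ δ : Fin d → Bool,
        (∏ t, φ₁ (θ t) (sgn (δ t) * z t)) *
          ∑ i ∈ univ.filter (fun i => ∀ t, if δ t then x i t ≤ z t else z t < x i t),
            y i * ∏ t, φ₂ (θ t) (sgn (δ t) * x i t) := by
  set D : Fin N → Fin d → Bool := fun i t => decide (x i t ≤ z t) with hD
  have hsgnD : ∀ i t, sgn (D i t) = if x i t ≤ z t then (1:ℝ) else -1 := by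
    intro i t
    by_cases h : x i t ≤ z t <;> simp [hD, hsgn, h]
  have key : ∀ i t, k |x i t - z t| =
      ∑ p, φ₁ p (sgn (D i t) * z t) * φ₂ p (sgn (D i t) * x i t) := by
    intro i t
    by_cases h : x i t ≤ z t
    · rw [abs_of_nonpos (by linarith : x i t - z t ≤ 0), hsgnD i t, if_pos h]
      have : -(x i t - z t) = z t - x i t := by ring
      rw [this, hdec]
      simp
    · rw [abs_of_pos (by push_neg at h; linarith : (0:ℝ) < x i t - z t),
        hsgnD i t, if_neg h]
      have : x i t - z t = (-1 * z t) - (-1 * x i t) := by ring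
      rw [this, hdec]
  have hcond : ∀ (i : Fin N) (δ : Fin d → Bool),
      (∀ t, if δ t then x i t ≤ z t else z t < x i t) ↔ δ = D i := by
    intro i δ
    constructor
    · intro h
      funext t
      have := h t
      cases hb : δ t
      · rw [hb] at this; simp at this
        simp [hD, not_le.mpr this]
      · rw [hb] at this; simp at this
        simp [hD, this]
    · intro h t
      subst h
      by_cases hx : x i t ≤ z t
      · simp [hD, hx]
      · simp [hD, hx, not_le.mp hx]
  -- transform RHS
  have rhs_eq : ∀ (θ : Fin d → Fin P) (δ : Fin d → Bool),
      (∏ t, φ₁ (θ t) (sgn (δ t) * z t)) *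
        ∑ i ∈ univ.filter (fun i => ∀ t, if δ t then x i t ≤ z t else z t < x i t),
          y i * ∏ t, φ₂ (θ t) (sgn (δ t) * x i t)
      = ∑ i : Fin N, if δ = D i then
          y i * ∏ t, φ₁ (θ t) (sgn (D i t) * z t) * φ₂ (θ t) (sgn (D i t) * x i t)
        else 0 := by
    intro θ δ
    rw [Finset.mul_sum, Finset.sum_filter]
    refine Finset.sum_congr rfl fun i _ => ?_
    by_cases h : δ = D i
    · rw [if_pos ((hcond i δ).mpr h), if_pos h, h, Finset.prod_mul_distrib]
      ring
    · rw [if_neg fun hc => h ((hcond i δ).mp hc), if_neg h]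
  calc ∑ i, y i * ∏ t, k |x i t - z t|
      = ∑ i, ∑ θ : Fin d → Fin P,
          y i * ∏ t, φ₁ (θ t) (sgn (D i t) * z t) * φ₂ (θ t) (sgn (D i t) * x i t) := by
        refine Finset.sum_congr rfl fun i _ => ?_
        have : ∏ t, k |x i t - z t|
            = ∏ t, ∑ p, φ₁ p (sgn (D i t) * z t) * φ₂ p (sgn (D i t) * x i t) :=
          Finset.prod_congr rfl fun t _ => key i t
        rw [this, Fintype.prod_sum, Finset.mul_sum]
    _ = ∑ θ : Fin d → Fin P, ∑ i, ∑ δ : Fin d → Bool, if δ = D i then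
          y i * ∏ t, φ₁ (θ t) (sgn (D i t) * z t) * φ₂ (θ t) (sgn (D i t) * x i t)
        else 0 := by
        rw [Finset.sum_comm]
        refine Finset.sum_congr rfl fun θ _ => Finset.sum_congr rfl fun i _ => ?_
        rw [Finset.sum_ite_eq' Finset.univ (D i)]
        simp
    _ = _ := by
        refine Finset.sum_congr rfl fun θ _ => ?_
        rw [Finset.sum_comm]
        exact Finset.sum_congr rfl fun δ _ => (rhs_eq θ δ).symm
end

section
/- Suppose the kernel K(u) = k(‖u‖₂²) on ℝ^d (k applied to the squared Euclidean norm) is positive definite for every dimension d ≥ 1. Then the L1 kernel K₁(u) = k(‖u‖₁) is also positive definite for every d ≥ 1. -/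
open Finset Real

private lemma g_nonneg (c : ℕ → ℝ) (hc : Monotone c) (v : ℝ) (t : ℕ) :
    0 ≤ min v (c (t+1)) - min v (c t) :=
  sub_nonneg.mpr (min_le_min le_rfl (hc (Nat.le_succ t)))

private lemma cross_lemma (c : ℕ → ℝ) (hc : Monotone c) {a b : ℝ} {p : ℕ}
    (ha : c p = a) (hab : a ≤ b) (t : ℕ) :
    Real.sqrt (min a (c (t+1)) - min a (c t)) * Real.sqrt (min b (c (t+1)) - min b (c t))
      = min a (c (t+1)) - min a (c t) := by
  rcases eq_or_lt_of_le (g_nonneg c hc a t) with h | h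
  · rw [← h, Real.sqrt_zero, zero_mul]
  · have hct : c t < a := by
      by_contra hle
      push_neg at hle
      have h1 : min a (c t) = a := min_eq_left hle
      have h2 : min a (c (t+1)) ≤ a := min_le_left _ _
      rw [h1] at h
      linarith
    have htp : t < p := by
      by_contra hle
      push_neg at hle
      exact absurd (ha ▸ hc hle) (not_le.mpr hct)
    have hct1 : c (t+1) ≤ a := ha ▸ hc htp
    have e1 : min a (c (t+1)) = c (t+1) := min_eq_right hct1
    have e2 : min a (c t) = c t := min_eq_right hct.le
    have e3 : min b (c (t+1)) = c (t+1) := min_eq_right (hct1.trans hab)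
    have e4 : min b (c t) = c t := min_eq_right (hct.le.trans hab)
    rw [e1, e2, e3, e4, Real.mul_self_sqrt (by linarith [hc (Nat.le_succ t)])]

private lemma telescope (M : ℕ) (c : ℕ → ℝ) (v : ℝ) :
    ∑ t ∈ Finset.range M, (min v (c (t+1)) - min v (c t)) = min v (c M) - min v (c 0) :=
  Finset.sum_range_sub (fun n => min v (c n)) M

private lemma pair_sum (M : ℕ) (c : ℕ → ℝ) (hc : Monotone c) {a b : ℝ} {p q : ℕ}
    (hp : p ≤ M) (hq : q ≤ M) (ha : c p = a) (hb : c q = b) :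
    ∑ t : Fin M, (Real.sqrt (min a (c ((t:ℕ)+1)) - min a (c (t:ℕ)))
      - Real.sqrt (min b (c ((t:ℕ)+1)) - min b (c (t:ℕ))))^2 = |a - b| := by
  wlog hab : a ≤ b generalizing a b p q
  · have := this hq hp hb ha (le_of_not_ge hab)
    rw [abs_sub_comm] at this
    rw [← this]
    apply Finset.sum_congr rfl
    intro t _
    ring
  have hsum : ∀ t : ℕ,
      (Real.sqrt (min a (c (t+1)) - min a (c t)) - Real.sqrt (min b (c (t+1)) - min b (c t)))^2
      = (min b (c (t+1)) - min b (c t)) - (min a (c (t+1)) - min a (c t)) := by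
    intro t
    have h1 : Real.sqrt (min a (c (t+1)) - min a (c t)) ^ 2 = min a (c (t+1)) - min a (c t) :=
      Real.sq_sqrt (g_nonneg c hc a t)
    have h2 : Real.sqrt (min b (c (t+1)) - min b (c t)) ^ 2 = min b (c (t+1)) - min b (c t) :=
      Real.sq_sqrt (g_nonneg c hc b t)
    have h3 := cross_lemma c hc ha hab t
    nlinarith [h1, h2, h3]
  calc ∑ t : Fin M, (Real.sqrt (min a (c ((t:ℕ)+1)) - min a (c (t:ℕ)))
        - Real.sqrt (min b (c ((t:ℕ)+1)) - min b (c (t:ℕ))))^2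
      = ∑ t ∈ Finset.range M, ((min b (c (t+1)) - min b (c t)) - (min a (c (t+1)) - min a (c t))) := by
        rw [Fin.sum_univ_eq_sum_range (fun t => (Real.sqrt (min a (c (t+1)) - min a (c t))
          - Real.sqrt (min b (c (t+1)) - min b (c t)))^2)]
        exact Finset.sum_congr rfl fun t _ => hsum t
    _ = (min b (c M) - min b (c 0)) - (min a (c M) - min a (c 0)) := by
        rw [Finset.sum_sub_distrib, telescope, telescope]
    _ = |a - b| := by
        have hbM : b ≤ c M := hb ▸ hc hq
        have haM : a ≤ c M := ha ▸ hc hp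
        have h0a : c 0 ≤ a := ha ▸ hc (Nat.zero_le p)
        have h0b : c 0 ≤ b := hb ▸ hc (Nat.zero_le q)
        rw [min_eq_left hbM, min_eq_left haM, min_eq_right h0a, min_eq_right h0b,
          abs_sub_comm, abs_of_nonneg (by linarith)]
        ring

private lemma exists_embed (N : ℕ) (a : Fin N → ℝ) :
    ∃ φ : Fin N → Fin N → ℝ, ∀ i j, ∑ t, (φ i t - φ j t)^2 = |a i - a j| := by
  rcases Nat.eq_zero_or_pos N with h | h
  · subst h
    exact ⟨fun i _ => 0, fun i => i.elim0⟩
  set s := Finset.univ.image a with hs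
  have hcard : 0 < s.card := Finset.card_pos.mpr ⟨a ⟨0, h⟩, Finset.mem_image_of_mem a (Finset.mem_univ _)⟩
  have hcardN : s.card ≤ N := le_trans (Finset.card_image_le) (by simp)
  let e := s.orderEmbOfFin rfl
  set c : ℕ → ℝ := fun n => e ⟨min n (s.card - 1), by omega⟩ with hcdef
  have hc : Monotone c := by
    intro m n hmn
    exact e.monotone (by simp only [Fin.mk_le_mk]; omega)
  have hval : ∀ i : Fin N, ∃ p ≤ N, c p = a i := by
    intro i
    have hmem : a i ∈ s := Finset.mem_image_of_mem a (Finset.mem_univ _)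
    have : a i ∈ Set.range e := by rw [Finset.range_orderEmbOfFin]; exact hmem
    obtain ⟨p, hp⟩ := this
    have hplt := p.isLt
    refine ⟨p, by omega, ?_⟩
    have hpe : (⟨min (p:ℕ) (s.card - 1), by omega⟩ : Fin s.card) = p := by
      apply Fin.ext
      simp only [Fin.val_mk]
      omega
    rw [hcdef]
    simp only
    rw [hpe, hp]
  refine ⟨fun i t => Real.sqrt (min (a i) (c ((t:ℕ)+1)) - min (a i) (c (t:ℕ))), ?_⟩
  intro i j
  obtain ⟨p, hp, hap⟩ := hval i
  obtain ⟨q, hq, haq⟩ := hval j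
  exact pair_sum N c hc hp hq hap haq

open Finset in
/-- If the kernel `u ↦ k (‖u‖₂²)` (k applied to the squared Euclidean norm)
is positive definite in every dimension `d ≥ 1`, then so is the L1 kernel
`u ↦ k (‖u‖₁)`. -/
theorem l1_kernel_positive_definite
    (k : ℝ → ℝ)
    (hL2sq : ∀ d : ℕ, 1 ≤ d → ∀ (N : ℕ) (x : Fin N → Fin d → ℝ) (y : Fin N → ℝ),
      0 ≤ ∑ i, ∑ j, y i * y j * k (∑ t, (x i t - x j t) ^ 2)) :
    ∀ d : ℕ, 1 ≤ d → ∀ (N : ℕ) (x : Fin N → Fin d → ℝ) (y : Fin N → ℝ),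
      0 ≤ ∑ i, ∑ j, y i * y j * k (∑ t, |x i t - x j t|) := by
  intro d hd N x y
  rcases Nat.eq_zero_or_pos N with hN | hN
  · subst hN; simp
  choose φ hφ using fun t : Fin d => exists_embed N (fun i => x i t)
  set x' : Fin N → Fin (d*N) → ℝ :=
    fun i s => φ (finProdFinEquiv.symm s).1 i (finProdFinEquiv.symm s).2 with hx'
  have key : ∀ i j : Fin N, ∑ s : Fin (d*N), (x' i s - x' j s)^2 = ∑ t : Fin d, |x i t - x j t| := by
    intro i j
    rw [← Equiv.sum_comp (finProdFinEquiv : Fin d × Fin N ≃ Fin (d*N))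
      (fun s => (x' i s - x' j s)^2)]
    simp only [hx', Equiv.symm_apply_apply]
    rw [Fintype.sum_prod_type]
    exact Finset.sum_congr rfl fun t _ => hφ t i j
  have := hL2sq (d*N) (Nat.one_le_iff_ne_zero.mpr (by positivity)) N x' y
  simpa only [key] using this
end

section
/- For all u ∈ ℝ, the half-integer Matérn kernels converge pointwise to the Gaussian kernel: K_{p+1/2}(u) → exp(−u²/2) as p → ∞, where K_{p+1/2}(u) = (Σ_{i=0}^{p} (p!/(i!(p−i)!))·((2p−i)!/(2p)!)·(2√(2p+1)|u|)^i)·exp(−√(2p+1)|u|). -/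
open MeasureTheory Set Real Filter Topology

private lemma myIntOn (n : ℕ) : IntegrableOn (fun t : ℝ => Real.exp (-t) * t ^ n) (Ioi 0) := by
  have h := Real.GammaIntegral_convergent (s := n + 1) (by positivity)
  refine h.congr_fun (fun t ht => ?_) measurableSet_Ioi
  simp only [add_sub_cancel_right, Real.rpow_natCast]

private lemma myInt (n : ℕ) :
    ∫ t in Ioi (0:ℝ), Real.exp (-t) * t ^ n = (n.factorial : ℝ) := by
  have h := Real.Gamma_eq_integral (s := (n : ℝ) + 1) (by positivity)
  rw [show ((n:ℝ) + 1) = ((n:ℕ) + 1 : ℝ) by norm_num, Real.Gamma_nat_eq_factorial] at h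
  rw [h]
  refine setIntegral_congr_fun measurableSet_Ioi (fun t ht => ?_)
  rw [add_sub_cancel_right, Real.rpow_natCast]

private lemma myTranslate (f : ℝ → ℝ) (x : ℝ) :
    ∫ t in Ioi (0:ℝ), f (t + x) = ∫ s in Ioi x, f s := by
  rw [← integral_indicator measurableSet_Ioi, ← integral_indicator measurableSet_Ioi,
    ← integral_add_right_eq_self ((Ioi x).indicator f) x]
  congr 1
  ext t
  by_cases ht : t ∈ Ioi (0:ℝ)
  · rw [indicator_of_mem ht, indicator_of_mem (by simpa using (mem_Ioi.1 ht))]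
  · rw [indicator_of_notMem ht, indicator_of_notMem (by simpa using ht)]

private lemma key (p : ℕ) (x : ℝ) :
    (∑ i ∈ Finset.range (p+1),
        ((p.factorial : ℝ) / ((i.factorial : ℝ) * ((p-i).factorial : ℝ)))
          * (((2*p-i).factorial : ℝ) / (((2*p).factorial : ℝ)))
          * (2*x)^i) * Real.exp (-x)
    = (((2*p).factorial : ℝ))⁻¹ * ∫ s in Ioi x, Real.exp (-s) * (s^2 - x^2)^p := by
  have ht : ∫ s in Ioi x, Real.exp (-s) * (s^2 - x^2)^p
      = ∫ t in Ioi (0:ℝ), Real.exp (-(t+x)) * ((t+x)^2 - x^2)^p :=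
    (myTranslate (fun s => Real.exp (-s) * (s^2 - x^2)^p) x).symm
  rw [ht]
  have h2 : ∀ t ∈ Ioi (0:ℝ), Real.exp (-(t+x)) * ((t+x)^2 - x^2)^p
      = ∑ i ∈ Finset.range (p+1),
          (Real.exp (-x) * ((2*x)^i * (p.choose i : ℝ))) * (Real.exp (-t) * t^(2*p-i)) := by
    intro t _
    have e1 : (t+x)^2 - x^2 = (2*x + t) * t := by ring
    rw [e1, mul_pow, add_pow, Finset.sum_mul, Finset.mul_sum]
    refine Finset.sum_congr rfl (fun i hi => ?_)
    have hip : i ≤ p := Nat.lt_succ_iff.mp (Finset.mem_range.mp hi)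
    have e2 : t ^ (p - i) * t ^ p = t ^ (2*p - i) := by
      rw [← pow_add]; congr 1; omega
    have e3 : Real.exp (-(t+x)) = Real.exp (-t) * Real.exp (-x) := by
      rw [← Real.exp_add]; ring_nf
    rw [e3, ← e2]; ring
  rw [setIntegral_congr_fun measurableSet_Ioi h2, integral_finset_sum _
    (fun i _ => ((myIntOn (2*p-i)).const_mul _)), Finset.mul_sum, Finset.sum_mul]
  refine Finset.sum_congr rfl (fun i hi => ?_)
  have hip : i ≤ p := Nat.lt_succ_iff.mp (Finset.mem_range.mp hi)
  rw [MeasureTheory.integral_const_mul, myInt, Nat.cast_choose ℝ hip]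
  have h1 : ((i.factorial : ℝ) * ((p-i).factorial : ℝ)) ≠ 0 := by positivity
  have h2 : (((2*p).factorial : ℝ)) ≠ 0 := by positivity
  field_simp

private lemma int_comb (p : ℕ) :
    ∫ s in Ioi (0:ℝ), (s - (2*(p:ℝ)+1))^2 * (Real.exp (-s) * s^(2*p))
    = ((2*p).factorial : ℝ) * (2*(p:ℝ)+1) := by
  have e : ∀ s : ℝ, (s - (2*(p:ℝ)+1))^2 * (Real.exp (-s) * s^(2*p))
      = ((Real.exp (-s) * s^(2*p+2)) - (2*(2*(p:ℝ)+1))*(Real.exp (-s)*s^(2*p+1)))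
        + (2*(p:ℝ)+1)^2*(Real.exp (-s)*s^(2*p)) := fun s => by ring
  rw [setIntegral_congr_fun measurableSet_Ioi (fun s _ => e s)]
  have h1 : IntegrableOn (fun s : ℝ => Real.exp (-s) * s^(2*p+2)
      - (2*(2*(p:ℝ)+1))*(Real.exp (-s)*s^(2*p+1))) (Ioi 0) :=
    (myIntOn _).sub ((myIntOn _).const_mul _)
  have h2 : IntegrableOn (fun s : ℝ => (2*(p:ℝ)+1)^2*(Real.exp (-s)*s^(2*p))) (Ioi 0) :=
    (myIntOn _).const_mul _
  rw [integral_add h1 h2, integral_sub (myIntOn _) ((myIntOn _).const_mul _),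
    MeasureTheory.integral_const_mul, MeasureTheory.integral_const_mul,
    myInt, myInt, myInt]
  have f1 : ((2*p+1).factorial : ℝ) = (2*(p:ℝ)+1) * ((2*p).factorial : ℝ) := by
    rw [Nat.factorial_succ]; push_cast; ring
  have f2 : ((2*p+2).factorial : ℝ) = (2*(p:ℝ)+2) * ((2*p+1).factorial : ℝ) := by
    rw [show 2*p+2 = (2*p+1)+1 from rfl, Nat.factorial_succ]; push_cast; ring
  rw [f2, f1]; ring

private lemma intOn_comb (p : ℕ) (m : ℝ) :
    IntegrableOn (fun s : ℝ => (s - m)^2 * (Real.exp (-s) * s^(2*p))) (Ioi 0) := by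
  have e : (fun s : ℝ => (s - m)^2 * (Real.exp (-s) * s^(2*p))) =
      fun s => ((Real.exp (-s) * s^(2*p+2)) - 2*m*(Real.exp (-s)*s^(2*p+1)))
        + m^2*(Real.exp (-s)*s^(2*p)) := by
    funext s; ring
  rw [e]
  exact ((myIntOn _).sub ((myIntOn _).const_mul _)).add ((myIntOn _).const_mul _)

private lemma cheb (p : ℕ) (δ : ℝ) (hδ : 0 < δ) :
    ∫ s in Ioi (0:ℝ) \ Icc ((2*(p:ℝ)+1) - δ) ((2*(p:ℝ)+1) + δ), Real.exp (-s) * s^(2*p)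
      ≤ ((2*p).factorial : ℝ) * (2*(p:ℝ)+1) / δ^2 := by
  set m : ℝ := 2*(p:ℝ)+1 with hm
  set B : Set ℝ := Ioi (0:ℝ) \ Icc (m - δ) (m + δ) with hB
  have hBm : MeasurableSet B := measurableSet_Ioi.diff measurableSet_Icc
  have hsub : B ⊆ Ioi 0 := diff_subset
  have hint_g : IntegrableOn
      (fun s : ℝ => (δ^2)⁻¹ * ((s - m)^2 * (Real.exp (-s) * s^(2*p)))) (Ioi 0) :=
    (intOn_comb p m).const_mul _
  have step1 : ∫ s in B, Real.exp (-s) * s^(2*p)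
      ≤ ∫ s in B, (δ^2)⁻¹ * ((s - m)^2 * (Real.exp (-s) * s^(2*p))) := by
    refine setIntegral_mono_on ((myIntOn (2*p)).mono_set hsub) (hint_g.mono_set hsub) hBm ?_
    intro s hs
    obtain ⟨hs0, hsI⟩ := hs
    have hs0' : (0:ℝ) < s := hs0
    have h1 : δ^2 ≤ (s - m)^2 := by
      rcases not_and_or.mp (fun h => hsI ⟨h.1, h.2⟩) with h | h
      · nlinarith [lt_of_not_ge h]
      · nlinarith [lt_of_not_ge h]
    have h2 : 0 ≤ Real.exp (-s) * s^(2*p) :=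
      mul_nonneg (Real.exp_pos _).le (pow_nonneg hs0'.le _)
    have hpos : (0:ℝ) < (δ^2)⁻¹ := by positivity
    have h4 : (δ^2)⁻¹ * δ^2 = 1 := inv_mul_cancel₀ (by positivity)
    nlinarith [mul_le_mul_of_nonneg_left h1 hpos.le]
  have step2 : ∫ s in B, (δ^2)⁻¹ * ((s - m)^2 * (Real.exp (-s) * s^(2*p)))
      ≤ ∫ s in Ioi (0:ℝ), (δ^2)⁻¹ * ((s - m)^2 * (Real.exp (-s) * s^(2*p))) := by
    refine setIntegral_mono_set hint_g ?_ hsub.eventuallyLE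
    filter_upwards [self_mem_ae_restrict measurableSet_Ioi] with s hs
    have hs0' : (0:ℝ) < s := hs
    have h2 : 0 ≤ Real.exp (-s) * s^(2*p) :=
      mul_nonneg (Real.exp_pos _).le (pow_nonneg hs0'.le _)
    positivity
  calc ∫ s in B, Real.exp (-s) * s^(2*p) ≤ _ := step1
    _ ≤ _ := step2
    _ = ((2*p).factorial : ℝ) * (2*(p:ℝ)+1) / δ^2 := by
        rw [MeasureTheory.integral_const_mul, int_comb]
        field_simp

private lemma lower_pt (a s x : ℝ) (ha : 0 < a) (has : a ≤ s) :
    (1 - x^2/a^2) * s^2 ≤ s^2 - x^2 := by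
  have h2 : a^2 ≤ s^2 := pow_le_pow_left₀ ha.le has 2
  have h3 : x^2 * a^2 ≤ x^2 * s^2 := mul_le_mul_of_nonneg_left h2 (sq_nonneg x)
  have h1 : x^2 ≤ x^2 * s^2 / a^2 := by
    rw [le_div_iff₀ (by positivity)]; linarith
  have e : (1 - x^2/a^2) * s^2 = s^2 - x^2*s^2/a^2 := by ring
  rw [e]; linarith

private lemma upper_pt (b s x : ℝ) (hb : 0 < b) (h0 : 0 ≤ s) (hsb : s ≤ b) :
    s^2 - x^2 ≤ (1 - x^2/b^2) * s^2 := by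
  have h2 : s^2 ≤ b^2 := pow_le_pow_left₀ h0 hsb 2
  have h3 : x^2 * s^2 ≤ x^2 * b^2 := mul_le_mul_of_nonneg_left h2 (sq_nonneg x)
  have h1 : x^2 * s^2 / b^2 ≤ x^2 := by
    rw [div_le_iff₀ (by positivity)]; linarith
  have e : (1 - x^2/b^2) * s^2 = s^2 - x^2*s^2/b^2 := by ring
  rw [e]; linarith

private lemma intOn_main (p : ℕ) (x : ℝ) (hx : 0 ≤ x) :
    IntegrableOn (fun s : ℝ => Real.exp (-s) * (s^2 - x^2)^p) (Ioi x) := by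
  have e : (fun s : ℝ => Real.exp (-s) * (s^2 - x^2)^p) =
      fun s => ∑ k ∈ Finset.range (p+1),
        ((-(x^2))^(p-k) * (p.choose k : ℝ)) * (Real.exp (-s) * s^(2*k)) := by
    funext s
    rw [sub_eq_add_neg, add_pow, Finset.mul_sum]
    exact Finset.sum_congr rfl fun k _ => by rw [pow_mul]; ring
  rw [e]
  exact integrable_finset_sum _ (fun k _ =>
    ((myIntOn (2*k)).mono_set (Ioi_subset_Ioi hx)).const_mul _)
private lemma bounds (p : ℕ) (x ε : ℝ) (hx : 0 ≤ x) (hε : 0 < ε) (hε1 : ε < 1)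
    (hxm : x < (1-ε)*(2*(p:ℝ)+1)) :
    (1 - x^2/((1-ε)*(2*(p:ℝ)+1))^2)^p * (1 - 1/(ε^2*(2*(p:ℝ)+1)))
      ≤ ((2*p).factorial : ℝ)⁻¹ * ∫ s in Ioi x, Real.exp (-s) * (s^2-x^2)^p
    ∧ ((2*p).factorial : ℝ)⁻¹ * ∫ s in Ioi x, Real.exp (-s) * (s^2-x^2)^p
      ≤ (1 - x^2/((1+ε)*(2*(p:ℝ)+1))^2)^p + 1/(ε^2*(2*(p:ℝ)+1)) := by
  set m : ℝ := 2*(p:ℝ)+1 with hm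
  clear_value m
  have hm0 : (0:ℝ) < m := by rw [hm]; positivity
  set δ : ℝ := ε * m with hδdef
  clear_value δ
  have hδ : 0 < δ := by rw [hδdef]; exact mul_pos hε hm0
  have hmδ1 : m - δ = (1-ε)*m := by rw [hδdef]; ring
  have hmδ2 : m + δ = (1+ε)*m := by rw [hδdef]; ring
  have h1εm : 0 < (1-ε)*m := mul_pos (by linarith) hm0
  have h1εm' : 0 < (1+ε)*m := mul_pos (by linarith) hm0
  set G : Set ℝ := Icc (m - δ) (m + δ) with hG
  clear_value G
  have hGmeas : MeasurableSet G := by rw [hG]; exact measurableSet_Icc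
  have hGmem : ∀ s ∈ G, (1-ε)*m ≤ s ∧ s ≤ (1+ε)*m := by
    intro s hs
    rw [hG] at hs
    exact ⟨hmδ1 ▸ hs.1, hmδ2 ▸ hs.2⟩
  have hGsub : G ⊆ Ioi x := fun s hs => lt_of_lt_of_le hxm (hGmem s hs).1
  have hGsub0 : G ⊆ Ioi 0 := fun s hs => lt_of_lt_of_le h1εm (hGmem s hs).1
  have hxIoi : Ioi x ⊆ Ioi 0 := Ioi_subset_Ioi hx
  have hfac : (0:ℝ) < ((2*p).factorial : ℝ) := by positivity
  have hfnn : ∀ s ∈ Ioi x, 0 ≤ Real.exp (-s) * (s^2-x^2)^p := by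
    intro s hs
    have hsx : x < s := hs
    have h0 : (0:ℝ) ≤ s^2 - x^2 := sub_nonneg.mpr (pow_le_pow_left₀ hx hsx.le 2)
    exact mul_nonneg (Real.exp_pos _).le (pow_nonneg h0 _)
  have hIf := intOn_main p x hx
  have hIφx : IntegrableOn (fun s : ℝ => Real.exp (-s) * s^(2*p)) (Ioi x) :=
    (myIntOn (2*p)).mono_set hxIoi
  have htail : ∫ s in Ioi (0:ℝ) \ G, Real.exp (-s) * s^(2*p)
      ≤ ((2*p).factorial : ℝ) * (1/(ε^2*m)) := by
    have h := cheb p δ hδ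
    rw [← hm, ← hG] at h
    have hδ2 : ((2*p).factorial : ℝ) * m / δ^2 = ((2*p).factorial : ℝ) * (1/(ε^2*m)) := by
      rw [hδdef]; field_simp
    linarith
  have hsplit0 : (∫ s in G, Real.exp (-s) * s^(2*p))
      + ∫ s in Ioi (0:ℝ) \ G, Real.exp (-s) * s^(2*p)
      = ∫ s in Ioi (0:ℝ), Real.exp (-s) * s^(2*p) := by
    have h := integral_inter_add_diff (s := Ioi (0:ℝ)) (t := G) hGmeas (myIntOn (2*p))
    rwa [inter_eq_self_of_subset_right hGsub0] at h
  have hmassG : ((2*p).factorial : ℝ) - ((2*p).factorial : ℝ) * (1/(ε^2*m))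
      ≤ ∫ s in G, Real.exp (-s) * s^(2*p) := by
    have h := myInt (2*p)
    linarith
  set L : ℝ := (1 - x^2/((1-ε)*m)^2)^p with hL
  set U : ℝ := (1 - x^2/((1+ε)*m)^2)^p with hU
  clear_value L U
  have hl0 : 0 ≤ 1 - x^2/((1-ε)*m)^2 := by
    rw [sub_nonneg, div_le_one (by positivity)]
    exact pow_le_pow_left₀ hx hxm.le 2
  have hLnn : 0 ≤ L := hL ▸ pow_nonneg hl0 _
  have hu0 : 0 ≤ 1 - x^2/((1+ε)*m)^2 := by
    rw [sub_nonneg, div_le_one (by positivity)]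
    have h2 : (1-ε)*m ≤ (1+ε)*m := mul_le_mul_of_nonneg_right (by linarith) hm0.le
    exact pow_le_pow_left₀ hx (hxm.le.trans h2) 2
  have hUnn : 0 ≤ U := hU ▸ pow_nonneg hu0 _
  constructor
  · -- lower bound
    have hGf : ∫ s in G, L * (Real.exp (-s) * s^(2*p))
        ≤ ∫ s in G, Real.exp (-s) * (s^2-x^2)^p := by
      refine setIntegral_mono_on ((hIφx.mono_set hGsub).const_mul _)
        (hIf.mono_set hGsub) hGmeas ?_
      intro s hs
      have hs1 : (1-ε)*m ≤ s := (hGmem s hs).1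
      have key := lower_pt ((1-ε)*m) s x h1εm hs1
      have hstep : L * s^(2*p) ≤ (s^2-x^2)^p := by
        calc L * s^(2*p) = ((1 - x^2/((1-ε)*m)^2) * s^2)^p := by
              rw [hL, pow_mul]; exact (mul_pow _ _ _).symm
          _ ≤ (s^2-x^2)^p :=
              pow_le_pow_left₀ (mul_nonneg hl0 (sq_nonneg s)) key _
      calc L * (Real.exp (-s) * s^(2*p)) = Real.exp (-s) * (L * s^(2*p)) := by ring
        _ ≤ Real.exp (-s) * (s^2-x^2)^p :=
            mul_le_mul_of_nonneg_left hstep (Real.exp_pos _).le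
    have hmono : ∫ s in G, Real.exp (-s) * (s^2-x^2)^p
        ≤ ∫ s in Ioi x, Real.exp (-s) * (s^2-x^2)^p := by
      refine setIntegral_mono_set hIf ?_ hGsub.eventuallyLE
      filter_upwards [self_mem_ae_restrict measurableSet_Ioi] with s hs using hfnn s hs
    have hLmass : L * (((2*p).factorial : ℝ) - ((2*p).factorial : ℝ) * (1/(ε^2*m)))
        ≤ ∫ s in G, L * (Real.exp (-s) * s^(2*p)) := by
      rw [MeasureTheory.integral_const_mul]
      exact mul_le_mul_of_nonneg_left hmassG hLnn
    have htrans := le_trans hLmass (le_trans hGf hmono)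
    calc L * (1 - 1/(ε^2*m))
        = ((2*p).factorial : ℝ)⁻¹
          * (L * (((2*p).factorial : ℝ) - ((2*p).factorial : ℝ) * (1/(ε^2*m)))) := by
          field_simp
      _ ≤ ((2*p).factorial : ℝ)⁻¹ * ∫ s in Ioi x, Real.exp (-s) * (s^2-x^2)^p :=
          mul_le_mul_of_nonneg_left htrans (by positivity)
  · -- upper bound
    have hsplit : (∫ s in Ioi x ∩ G, Real.exp (-s) * (s^2-x^2)^p)
        + ∫ s in Ioi x \ G, Real.exp (-s) * (s^2-x^2)^p
        = ∫ s in Ioi x, Real.exp (-s) * (s^2-x^2)^p :=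
      integral_inter_add_diff (s := Ioi x) (t := G) hGmeas hIf
    rw [inter_eq_self_of_subset_right hGsub] at hsplit
    have hGood : ∫ s in G, Real.exp (-s) * (s^2-x^2)^p
        ≤ U * ((2*p).factorial : ℝ) := by
      have h1 : ∫ s in G, Real.exp (-s) * (s^2-x^2)^p
          ≤ ∫ s in G, U * (Real.exp (-s) * s^(2*p)) := by
        refine setIntegral_mono_on (hIf.mono_set hGsub)
          ((hIφx.mono_set hGsub).const_mul _) hGmeas ?_
        intro s hs
        have hs2 : s ≤ (1+ε)*m := (hGmem s hs).2
        have hs0 : (0:ℝ) < s := hGsub0 hs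
        have hsx : x < s := hGsub hs
        have hsnn : (0:ℝ) ≤ s^2 - x^2 := sub_nonneg.mpr (pow_le_pow_left₀ hx hsx.le 2)
        have key := upper_pt ((1+ε)*m) s x h1εm' hs0.le hs2
        have hstep : (s^2-x^2)^p ≤ U * s^(2*p) := by
          calc (s^2-x^2)^p ≤ ((1 - x^2/((1+ε)*m)^2) * s^2)^p :=
                pow_le_pow_left₀ hsnn key _
            _ = U * s^(2*p) := by rw [hU, pow_mul]; exact mul_pow _ _ _
        calc Real.exp (-s) * (s^2-x^2)^p ≤ Real.exp (-s) * (U * s^(2*p)) :=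
              mul_le_mul_of_nonneg_left hstep (Real.exp_pos _).le
          _ = U * (Real.exp (-s) * s^(2*p)) := by ring
      have h2 : ∫ s in G, U * (Real.exp (-s) * s^(2*p))
          ≤ U * ((2*p).factorial : ℝ) := by
        rw [MeasureTheory.integral_const_mul, ← myInt (2*p)]
        refine mul_le_mul_of_nonneg_left ?_ hUnn
        refine setIntegral_mono_set (myIntOn (2*p)) ?_ hGsub0.eventuallyLE
        filter_upwards [self_mem_ae_restrict measurableSet_Ioi] with s hs
        have hs0' : (0:ℝ) < s := hs
        exact mul_nonneg (Real.exp_pos _).le (pow_nonneg hs0'.le _)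
      linarith
    have hBad : ∫ s in Ioi x \ G, Real.exp (-s) * (s^2-x^2)^p
        ≤ ((2*p).factorial : ℝ) * (1/(ε^2*m)) := by
      have h1 : ∫ s in Ioi x \ G, Real.exp (-s) * (s^2-x^2)^p
          ≤ ∫ s in Ioi x \ G, Real.exp (-s) * s^(2*p) := by
        refine setIntegral_mono_on (hIf.mono_set diff_subset)
          (hIφx.mono_set diff_subset) (measurableSet_Ioi.diff hGmeas) ?_
        intro s hs
        have hsx : x < s := hs.1
        have hsnn : (0:ℝ) ≤ s^2 - x^2 := sub_nonneg.mpr (pow_le_pow_left₀ hx hsx.le 2)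
        have hsle : s^2 - x^2 ≤ s^2 := sub_le_self _ (sq_nonneg x)
        have h2 : (s^2-x^2)^p ≤ s^(2*p) := by
          rw [pow_mul]
          exact pow_le_pow_left₀ hsnn hsle _
        exact mul_le_mul_of_nonneg_left h2 (Real.exp_pos _).le
      have h2 : ∫ s in Ioi x \ G, Real.exp (-s) * s^(2*p)
          ≤ ∫ s in Ioi (0:ℝ) \ G, Real.exp (-s) * s^(2*p) := by
        refine setIntegral_mono_set ((myIntOn (2*p)).mono_set diff_subset) ?_
          ((diff_subset_diff_left hxIoi).eventuallyLE)
        filter_upwards [self_mem_ae_restrict (measurableSet_Ioi.diff hGmeas)] with s hs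
        have hs0' : (0:ℝ) < s := hs.1
        exact mul_nonneg (Real.exp_pos _).le (pow_nonneg hs0'.le _)
      linarith
    have htot : ∫ s in Ioi x, Real.exp (-s) * (s^2-x^2)^p
        ≤ U * ((2*p).factorial : ℝ) + ((2*p).factorial : ℝ) * (1/(ε^2*m)) := by
      rw [← hsplit]
      exact add_le_add hGood hBad
    calc ((2*p).factorial : ℝ)⁻¹ * ∫ s in Ioi x, Real.exp (-s) * (s^2-x^2)^p
        ≤ ((2*p).factorial : ℝ)⁻¹
          * (U * ((2*p).factorial : ℝ) + ((2*p).factorial : ℝ) * (1/(ε^2*m))) :=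
          mul_le_mul_of_nonneg_left htot (by positivity)
      _ = U + 1/(ε^2*m) := by field_simp
private lemma hm_tendsto : Tendsto (fun p : ℕ => 2*(p:ℝ)+1) atTop atTop :=
  tendsto_atTop_add_const_right _ 1 (Tendsto.const_mul_atTop two_pos tendsto_natCast_atTop_atTop)

private lemma half_tendsto : Tendsto (fun p : ℕ => (p:ℝ)/(2*(p:ℝ)+1)) atTop (nhds (1/2)) := by
  have ha : Tendsto (fun p : ℕ => 2 + ((p:ℝ))⁻¹) atTop (nhds 2) := by
    simpa using tendsto_const_nhds.add
      (tendsto_natCast_atTop_atTop (R := ℝ)).inv_tendsto_atTop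
  have hb := ha.inv₀ two_ne_zero
  rw [show (1/2:ℝ) = 2⁻¹ by norm_num]
  refine hb.congr' ?_
  filter_upwards [eventually_ge_atTop 1] with p hp
  have hp0 : (0:ℝ) < p := by exact_mod_cast hp
  rw [eq_div_iff (by positivity)]
  field_simp

private lemma lim_pow (c : ℝ) :
    Tendsto (fun p : ℕ => (1 - c/(2*(p:ℝ)+1))^p) atTop (nhds (Real.exp (-c/2))) := by
  have h1 : Tendsto (fun p : ℕ => (2*(p:ℝ)+1) * Real.log (1 + (-c)/(2*(p:ℝ)+1)))
      atTop (nhds (-c)) := (Real.tendsto_mul_log_one_add_div_atTop (-c)).comp hm_tendsto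
  have h2 : Tendsto (fun p : ℕ => (p:ℝ) * Real.log (1 - c/(2*(p:ℝ)+1)))
      atTop (nhds (-c/2)) := by
    have h3 := half_tendsto.mul h1
    have : (1/2 : ℝ) * (-c) = -c/2 := by ring
    rw [this] at h3
    refine h3.congr (fun p => ?_)
    have hne : (2*(p:ℝ)+1) ≠ 0 := by positivity
    rw [sub_eq_add_neg, ← neg_div]
    field_simp
  have h4 := (Real.continuous_exp.tendsto _).comp h2
  refine h4.congr' ?_
  have h5 : Tendsto (fun p : ℕ => c/(2*(p:ℝ)+1)) atTop (nhds 0) :=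
    Tendsto.div_atTop tendsto_const_nhds hm_tendsto
  filter_upwards [h5.eventually (eventually_lt_nhds one_pos)] with p hp
  have hpos : 0 < 1 - c/(2*(p:ℝ)+1) := by linarith
  simp only [Function.comp_apply]
  rw [Real.exp_nat_mul, Real.exp_log hpos]

private lemma tail_tendsto (ε : ℝ) (hε : 0 < ε) :
    Tendsto (fun p : ℕ => 1/(ε^2*(2*(p:ℝ)+1))) atTop (nhds 0) :=
  Tendsto.div_atTop tendsto_const_nhds
    (Tendsto.const_mul_atTop (by positivity) hm_tendsto)


open Finset Filter in
/-- Pointwise convergence of the half-integer Matérn kernels to the Gaussian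
kernel: `K_{p+1/2}(u) → exp(-u²/2)` as `p → ∞`. -/
theorem matern_tendsto_gaussian (u : ℝ) :
    Tendsto (fun p : ℕ =>
        (∑ i ∈ range (p + 1),
            ((Nat.factorial p : ℝ) / ((Nat.factorial i : ℝ) * (Nat.factorial (p - i) : ℝ)))
              * ((Nat.factorial (2 * p - i) : ℝ) / (Nat.factorial (2 * p) : ℝ))
              * (2 * Real.sqrt (2 * p + 1) * |u|) ^ i)
          * Real.exp (-(Real.sqrt (2 * p + 1)) * |u|))
      atTop (nhds (Real.exp (-u ^ 2 / 2))) := by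
  have hxnn : ∀ p : ℕ, 0 ≤ Real.sqrt (2*(p:ℝ)+1) * |u| :=
    fun p => mul_nonneg (Real.sqrt_nonneg _) (abs_nonneg _)
  have hFK : ∀ p : ℕ,
      (((2*p).factorial : ℝ))⁻¹ * (∫ s in Ioi (Real.sqrt (2*(p:ℝ)+1) * |u|),
          Real.exp (-s) * (s^2 - (Real.sqrt (2*(p:ℝ)+1) * |u|)^2)^p)
      = (∑ i ∈ range (p + 1),
            ((Nat.factorial p : ℝ) / ((Nat.factorial i : ℝ) * (Nat.factorial (p - i) : ℝ)))
              * ((Nat.factorial (2 * p - i) : ℝ) / (Nat.factorial (2 * p) : ℝ))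
              * (2 * Real.sqrt (2 * p + 1) * |u|) ^ i)
          * Real.exp (-(Real.sqrt (2 * p + 1)) * |u|) := by
    intro p
    rw [← key p (Real.sqrt (2*(p:ℝ)+1) * |u|)]
    congr 1
    · refine Finset.sum_congr rfl fun i _ => ?_
      simp only [← mul_assoc]
    · rw [neg_mul]
  refine Tendsto.congr hFK ?_
  rw [tendsto_order]
  constructor
  · -- lower bound branch
    intro a ha
    have hg : Tendsto (fun ε : ℝ => Real.exp (-(u^2/(1-ε)^2)/2)) (nhds 0)
        (nhds (Real.exp (-u ^ 2 / 2))) := by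
      have hden : ContinuousAt (fun ε : ℝ => ((1:ℝ)-ε)^2) 0 := by fun_prop
      have hne : ((1:ℝ)-0)^2 ≠ 0 := by norm_num
      have h1 : ContinuousAt (fun ε : ℝ => -(u^2/(1-ε)^2)/2) 0 :=
        ((continuousAt_const.div hden hne).neg).div_const 2
      have h1t : Tendsto (fun ε : ℝ => -(u^2/(1-ε)^2)/2) (nhds 0) (nhds (-u^2/2)) := by
        have h2 := h1.tendsto
        norm_num at h2 ⊢
        exact h2
      exact (Real.continuous_exp.tendsto _).comp h1t
    obtain ⟨ε, hgt, hε1, hε0⟩ :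
        ∃ ε : ℝ, a < Real.exp (-(u^2/(1-ε)^2)/2) ∧ ε < 1 ∧ 0 < ε := by
      have e1 : ∀ᶠ ε in 𝓝[>] (0:ℝ), a < Real.exp (-(u^2/(1-ε)^2)/2) :=
        (hg.mono_left nhdsWithin_le_nhds).eventually (eventually_gt_nhds ha)
      have e2 : ∀ᶠ ε in 𝓝[>] (0:ℝ), ε < 1 :=
        Filter.Eventually.filter_mono nhdsWithin_le_nhds (eventually_lt_nhds one_pos)
      have e3 : ∀ᶠ ε in 𝓝[>] (0:ℝ), 0 < ε := eventually_mem_nhdsWithin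
      obtain ⟨ε, h1, h2, h3⟩ := (e1.and (e2.and e3)).exists
      exact ⟨ε, h1, h2, h3⟩
    set c : ℝ := u^2/(1-ε)^2 with hc
    have hLB : Tendsto (fun p : ℕ =>
        (1 - c/(2*(p:ℝ)+1))^p * (1 - 1/(ε^2*(2*(p:ℝ)+1)))) atTop
        (nhds (Real.exp (-c/2) * (1 - 0))) :=
      (lim_pow c).mul (tendsto_const_nhds.sub (tail_tendsto ε hε0))
    have hevgt : ∀ᶠ p : ℕ in atTop,
        a < (1 - c/(2*(p:ℝ)+1))^p * (1 - 1/(ε^2*(2*(p:ℝ)+1))) :=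
      hLB.eventually (eventually_gt_nhds (by rw [sub_zero, mul_one]; exact hgt))
    have hxm : ∀ᶠ p : ℕ in atTop,
        Real.sqrt (2*(p:ℝ)+1) * |u| < (1-ε)*(2*(p:ℝ)+1) := by
      have hC : ∀ᶠ p : ℕ in atTop, (|u|/(1-ε))^2 + 1 ≤ 2*(p:ℝ)+1 :=
        hm_tendsto.eventually_ge_atTop _
      filter_upwards [hC] with p hp
      have hm0 : (0:ℝ) < 2*(p:ℝ)+1 := by positivity
      have h1ε : (0:ℝ) < 1 - ε := by linarith
      have h1 : |u|/(1-ε) < Real.sqrt (2*(p:ℝ)+1) := by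
        calc |u|/(1-ε) = Real.sqrt ((|u|/(1-ε))^2) := (Real.sqrt_sq (by positivity)).symm
          _ < Real.sqrt (2*(p:ℝ)+1) := Real.sqrt_lt_sqrt (by positivity) (by linarith)
      have h2 : |u| < (1-ε) * Real.sqrt (2*(p:ℝ)+1) := by
        rw [div_lt_iff₀ h1ε] at h1
        linarith [h1]
      have hsq : (0:ℝ) < Real.sqrt (2*(p:ℝ)+1) := Real.sqrt_pos.mpr hm0
      calc Real.sqrt (2*(p:ℝ)+1) * |u|
          < Real.sqrt (2*(p:ℝ)+1) * ((1-ε) * Real.sqrt (2*(p:ℝ)+1)) :=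
            mul_lt_mul_of_pos_left h2 hsq
        _ = (1-ε) * (Real.sqrt (2*(p:ℝ)+1) * Real.sqrt (2*(p:ℝ)+1)) := by ring
        _ = (1-ε)*(2*(p:ℝ)+1) := by rw [Real.mul_self_sqrt hm0.le]
    filter_upwards [hevgt, hxm] with p hgt2 hxmp
    have hb := (bounds p (Real.sqrt (2*(p:ℝ)+1) * |u|) ε (hxnn p) hε0 hε1 hxmp).1
    have hxsq : (Real.sqrt (2*(p:ℝ)+1) * |u|)^2 = (2*(p:ℝ)+1) * u^2 := by
      rw [mul_pow, Real.sq_sqrt (by positivity), sq_abs]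
    have heq : (Real.sqrt (2*(p:ℝ)+1) * |u|)^2 / ((1-ε)*(2*(p:ℝ)+1))^2
        = c/(2*(p:ℝ)+1) := by
      rw [hxsq, hc]
      have hm0 : (0:ℝ) < 2*(p:ℝ)+1 := by positivity
      have h1ε : (1:ℝ) - ε ≠ 0 := sub_ne_zero.mpr (by linarith)
      field_simp
    rw [heq] at hb
    exact lt_of_lt_of_le hgt2 hb
  · -- upper bound branch
    intro a ha
    have hg : Tendsto (fun ε : ℝ => Real.exp (-(u^2/(1+ε)^2)/2)) (nhds 0)
        (nhds (Real.exp (-u ^ 2 / 2))) := by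
      have hden : ContinuousAt (fun ε : ℝ => ((1:ℝ)+ε)^2) 0 := by fun_prop
      have hne : ((1:ℝ)+0)^2 ≠ 0 := by norm_num
      have h1 : ContinuousAt (fun ε : ℝ => -(u^2/(1+ε)^2)/2) 0 :=
        ((continuousAt_const.div hden hne).neg).div_const 2
      have h1t : Tendsto (fun ε : ℝ => -(u^2/(1+ε)^2)/2) (nhds 0) (nhds (-u^2/2)) := by
        have h2 := h1.tendsto
        norm_num at h2 ⊢
        exact h2
      exact (Real.continuous_exp.tendsto _).comp h1t
    obtain ⟨ε, hgt, hε1, hε0⟩ :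
        ∃ ε : ℝ, Real.exp (-(u^2/(1+ε)^2)/2) < a ∧ ε < 1 ∧ 0 < ε := by
      have e1 : ∀ᶠ ε in 𝓝[>] (0:ℝ), Real.exp (-(u^2/(1+ε)^2)/2) < a :=
        (hg.mono_left nhdsWithin_le_nhds).eventually (eventually_lt_nhds ha)
      have e2 : ∀ᶠ ε in 𝓝[>] (0:ℝ), ε < 1 :=
        Filter.Eventually.filter_mono nhdsWithin_le_nhds (eventually_lt_nhds one_pos)
      have e3 : ∀ᶠ ε in 𝓝[>] (0:ℝ), 0 < ε := eventually_mem_nhdsWithin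
      obtain ⟨ε, h1, h2, h3⟩ := (e1.and (e2.and e3)).exists
      exact ⟨ε, h1, h2, h3⟩
    set c : ℝ := u^2/(1+ε)^2 with hc
    have hUB : Tendsto (fun p : ℕ =>
        (1 - c/(2*(p:ℝ)+1))^p + 1/(ε^2*(2*(p:ℝ)+1))) atTop
        (nhds (Real.exp (-c/2) + 0)) :=
      (lim_pow c).add (tail_tendsto ε hε0)
    have hevlt : ∀ᶠ p : ℕ in atTop,
        (1 - c/(2*(p:ℝ)+1))^p + 1/(ε^2*(2*(p:ℝ)+1)) < a :=
      hUB.eventually (eventually_lt_nhds (by rw [add_zero]; exact hgt))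
    have hxm : ∀ᶠ p : ℕ in atTop,
        Real.sqrt (2*(p:ℝ)+1) * |u| < (1-ε)*(2*(p:ℝ)+1) := by
      have hC : ∀ᶠ p : ℕ in atTop, (|u|/(1-ε))^2 + 1 ≤ 2*(p:ℝ)+1 :=
        hm_tendsto.eventually_ge_atTop _
      filter_upwards [hC] with p hp
      have hm0 : (0:ℝ) < 2*(p:ℝ)+1 := by positivity
      have h1ε : (0:ℝ) < 1 - ε := by linarith
      have h1 : |u|/(1-ε) < Real.sqrt (2*(p:ℝ)+1) := by
        calc |u|/(1-ε) = Real.sqrt ((|u|/(1-ε))^2) := (Real.sqrt_sq (by positivity)).symm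
          _ < Real.sqrt (2*(p:ℝ)+1) := Real.sqrt_lt_sqrt (by positivity) (by linarith)
      have h2 : |u| < (1-ε) * Real.sqrt (2*(p:ℝ)+1) := by
        rw [div_lt_iff₀ h1ε] at h1
        linarith [h1]
      have hsq : (0:ℝ) < Real.sqrt (2*(p:ℝ)+1) := Real.sqrt_pos.mpr hm0
      calc Real.sqrt (2*(p:ℝ)+1) * |u|
          < Real.sqrt (2*(p:ℝ)+1) * ((1-ε) * Real.sqrt (2*(p:ℝ)+1)) :=
            mul_lt_mul_of_pos_left h2 hsq
        _ = (1-ε) * (Real.sqrt (2*(p:ℝ)+1) * Real.sqrt (2*(p:ℝ)+1)) := by ring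
        _ = (1-ε)*(2*(p:ℝ)+1) := by rw [Real.mul_self_sqrt hm0.le]
    filter_upwards [hevlt, hxm] with p hlt2 hxmp
    have hb := (bounds p (Real.sqrt (2*(p:ℝ)+1) * |u|) ε (hxnn p) hε0 hε1 hxmp).2
    have hxsq : (Real.sqrt (2*(p:ℝ)+1) * |u|)^2 = (2*(p:ℝ)+1) * u^2 := by
      rw [mul_pow, Real.sq_sqrt (by positivity), sq_abs]
    have heq : (Real.sqrt (2*(p:ℝ)+1) * |u|)^2 / ((1+ε)*(2*(p:ℝ)+1))^2
        = c/(2*(p:ℝ)+1) := by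
      rw [hxsq, hc]
      have hm0 : (0:ℝ) < 2*(p:ℝ)+1 := by positivity
      have h1ε : (1:ℝ) + ε ≠ 0 := by positivity
      field_simp
    rw [heq] at hb
    exact lt_of_le_of_lt hb hlt2
end
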